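/- arXiv:1311.7167 — 2 statements merged into one kernel-verified Lean document; each statement's English description precedes it below -/
import Mathlib

section
/- Let q, m ≥ 1 and let 𝓛 = 𝓛(q;s₁,…,s_m) and 𝓛' = 𝓛(q;s'₁,…,s'_m) be two congruence lattices in ℤ^m for the same modulus q. Then N_𝓛(k,z) = N_{𝓛'}(k,z) for every k ∈ ℕ and every 0 ≤ z ≤ m if and only if N^red_𝓛(k,z) = N^red_{𝓛'}(k,z) for every k ∈ ℕ and every 0 ≤ z ≤ m. -/
/-- The congruence lattice `𝓛(q; s₁, …, s_m) = {a ∈ ℤ^m : ∑ aⱼsⱼ ≡ 0 (mod q)}`. -/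
def congLat (q m : ℕ) (s : Fin m → ℤ) : Set (Fin m → ℤ) :=
  {a | (q : ℤ) ∣ ∑ j, a j * s j}

/-- `N_𝓛(k, z)`: the number of `μ ∈ 𝓛` with `‖μ‖₁ = k` and exactly `z` zero coordinates. -/
noncomputable def NL (q m : ℕ) (s : Fin m → ℤ) (k z : ℕ) : ℕ :=
  Nat.card {a : Fin m → ℤ // a ∈ congLat q m s ∧ (∑ j, (a j).natAbs) = k ∧
    (Finset.univ.filter fun j => a j = 0).card = z}

/-- `N^red_𝓛(k, z)`: the number of `q`-reduced `μ ∈ 𝓛` (all `|aⱼ| < q`) with `‖μ‖₁ = k`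
and exactly `z` zero coordinates. -/
noncomputable def NLred (q m : ℕ) (s : Fin m → ℤ) (k z : ℕ) : ℕ :=
  Nat.card {a : Fin m → ℤ // a ∈ congLat q m s ∧ (∀ j, (a j).natAbs < q) ∧
    (∑ j, (a j).natAbs) = k ∧ (Finset.univ.filter fun j => a j = 0).card = z}

/-!
Truncated division by `q` writes each coordinate as `aⱼ = ρⱼ + q cⱼ` with `|ρⱼ| < q` and `ρⱼ, cⱼ` of
the sign of `aⱼ`, so `‖a‖₁ = ‖ρ‖₁ + q ‖c‖₁`, and `a` lies in the congruence lattice iff its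
reduction `ρ` does. Over a fixed reduced `ρ`, the number of `a` with `(‖a‖₁, Z(a)) = (k, z)`
depends only on `(‖ρ‖₁, Z(ρ)) = (k', z')` (up to signs and a permutation of coordinates, `c` ranges
over the same set); it vanishes for `k' > k` and is `[z' = z]` for `k' = k`. Hence
`N(k, z) = ∑_{k' ≤ k, z'} F(k, z, k', z') N^red(k', z')` with a unitriangular matrix `F` that does
not depend on the lattice, so the two families of counts determine each other.
-/

open Finset

namespace Int

theorem tmod_mul_tdiv_nonneg (x b : ℤ) (hb : 0 ≤ b) : 0 ≤ x.tmod b * x.tdiv b := by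
  rcases le_total 0 x with hx | hx
  · exact mul_nonneg (tmod_nonneg b hx) (Int.tdiv_nonneg hx hb)
  · have h := mul_nonneg (tmod_nonneg b (neg_nonneg.2 hx)) (Int.tdiv_nonneg (neg_nonneg.2 hx) hb)
    rwa [neg_tmod, Int.neg_tdiv, neg_mul_neg] at h

theorem natAbs_add_mul_of_mul_nonneg {r c : ℤ} (q : ℕ) (h : 0 ≤ r * c) :
    (r + q * c).natAbs = r.natAbs + q * c.natAbs := by
  rw [← Int.natAbs_natCast q, ← Int.natAbs_mul, Int.natAbs_natCast]
  rcases mul_nonneg_iff.1 h with ⟨hr, hc⟩ | ⟨hr, hc⟩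
  · exact natAbs_add_of_nonneg hr (mul_nonneg (natCast_nonneg q) hc)
  · exact natAbs_add_of_nonpos hr (mul_nonpos_of_nonneg_of_nonpos (natCast_nonneg q) hc)

theorem tdiv_tmod_add_mul {q : ℕ} (hq : 0 < q) {r c : ℤ} (hr : r.natAbs < q) (h : 0 ≤ r * c) :
    (r + q * c).tdiv q = c ∧ (r + q * c).tmod q = r := by
  have hq' : (q : ℤ) ≠ 0 := by exact_mod_cast hq.ne'
  rcases mul_nonneg_iff.1 h with ⟨hr0, hc⟩ | ⟨hr0, hc⟩
  · have : 0 ≤ r + q * c := add_nonneg hr0 (mul_nonneg (natCast_nonneg q) hc)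
    rw [Int.tdiv_tmod_unique this hq']
    omega
  · have : r + q * c ≤ 0 := add_nonpos hr0 (mul_nonpos_of_nonneg_of_nonpos (natCast_nonneg q) hc)
    rw [Int.tdiv_tmod_unique' this hq']
    omega

def signOrOne (r : ℤ) : ℤ := if r < 0 then -1 else 1

theorem signOrOne_mul_self (r : ℤ) : r.signOrOne * r.signOrOne = 1 := by
  unfold signOrOne; split_ifs <;> norm_num

theorem natAbs_signOrOne_mul (r c : ℤ) : (r.signOrOne * c).natAbs = c.natAbs := by
  unfold signOrOne; split_ifs <;> simp

theorem mul_signOrOne_mul_nonneg_iff {r c : ℤ} : 0 ≤ r * (r.signOrOne * c) ↔ (r ≠ 0 → 0 ≤ c) := by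
  unfold signOrOne
  rcases lt_trichotomy r 0 with hr | rfl | hr
  · simp only [if_pos hr, hr.ne, ne_eq, not_false_eq_true, forall_const]
    constructor <;> intro h <;> nlinarith
  · simp
  · simp only [if_neg (not_lt.2 hr.le), hr.ne', ne_eq, not_false_eq_true, forall_const, one_mul]
    exact mul_nonneg_iff_of_pos_left hr

/-- `x = r + q * signOrOne r * c`: the sign factor makes `c ≥ 0` whenever `r ≠ 0`. -/
def tmodFiberEquiv {q : ℕ} (hq : 0 < q) {r : ℤ} (hr : r.natAbs < q) :
    {x : ℤ // x.tmod q = r} ≃ {c : ℤ // r ≠ 0 → 0 ≤ c} where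
  toFun x := ⟨r.signOrOne * x.1.tdiv q, mul_signOrOne_mul_nonneg_iff.1 <| by
    rw [← mul_assoc r.signOrOne, signOrOne_mul_self, one_mul]
    simpa only [x.2] using tmod_mul_tdiv_nonneg x.1 q (natCast_nonneg q)⟩
  invFun c := ⟨r + q * (r.signOrOne * c.1),
    (tdiv_tmod_add_mul hq hr (mul_signOrOne_mul_nonneg_iff.2 c.2)).2⟩
  left_inv := by
    rintro ⟨x, rfl⟩
    ext
    dsimp only
    rw [← mul_assoc (signOrOne _), signOrOne_mul_self, one_mul, tmod_add_mul_tdiv]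
  right_inv c := by
    ext
    dsimp only
    rw [(tdiv_tmod_add_mul hq hr (mul_signOrOne_mul_nonneg_iff.2 c.2)).1, ← mul_assoc,
      signOrOne_mul_self, one_mul]

theorem natAbs_tmodFiberEquiv_symm {q : ℕ} (hq : 0 < q) {r : ℤ} (hr : r.natAbs < q)
    (c : {c : ℤ // r ≠ 0 → 0 ≤ c}) :
    ((tmodFiberEquiv hq hr).symm c).1.natAbs = r.natAbs + q * c.1.natAbs := by
  rw [← natAbs_signOrOne_mul r c.1]
  exact natAbs_add_mul_of_mul_nonneg q (mul_signOrOne_mul_nonneg_iff.2 c.2)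

end Int

section Lifts

variable {ι : Type*} [Fintype ι]

/-- For a `q`-reduced `ρ` with `‖ρ‖₁ = k'` vanishing exactly on `S`, this counts the vectors `a`
with `‖a‖₁ = k` and `Z(a) = z` that reduce to `ρ`. -/
noncomputable def liftCount (q : ℕ) (S : Finset ι) (k' k z : ℕ) : ℕ :=
  Nat.card {c : ι → ℤ // (∀ j ∉ S, 0 ≤ c j) ∧ k' + q * ∑ j, (c j).natAbs = k ∧
    #{j ∈ S | c j = 0} = z}

def tmodFiberPiEquiv {q : ℕ} (hq : 0 < q) {ρ : ι → ℤ} (hρ : ∀ j, (ρ j).natAbs < q) :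
    {a : ι → ℤ // ∀ j, (a j).tmod q = ρ j} ≃ {c : ι → ℤ // ∀ j, ρ j ≠ 0 → 0 ≤ c j} :=
  Equiv.subtypePiEquivPi.trans
    ((Equiv.piCongrRight fun j => Int.tmodFiberEquiv hq (hρ j)).trans Equiv.subtypePiEquivPi.symm)

theorem card_tmod_fiber {q : ℕ} (hq : 0 < q) {ρ : ι → ℤ} (hρ : ∀ j, (ρ j).natAbs < q)
    (k z : ℕ) :
    Nat.card {a : ι → ℤ // (∀ j, (a j).tmod q = ρ j) ∧ ∑ j, (a j).natAbs = k ∧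
      #{j | a j = 0} = z} = liftCount q {j | ρ j = 0} (∑ j, (ρ j).natAbs) k z := by
  set e := tmodFiberPiEquiv hq hρ
  have hnatAbs (c) (j) : ((e.symm c).1 j).natAbs = (ρ j).natAbs + q * (c.1 j).natAbs :=
    Int.natAbs_tmodFiberEquiv_symm hq (hρ j) ⟨c.1 j, c.2 j⟩
  have hnorm (c) : ∑ j, ((e.symm c).1 j).natAbs =
      ∑ j, (ρ j).natAbs + q * ∑ j, (c.1 j).natAbs := by
    simp only [hnatAbs, sum_add_distrib, mul_sum]
  have hzero (c) : #{j | (e.symm c).1 j = 0} = #{j ∈ {j | ρ j = 0} | c.1 j = 0} := by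
    rw [filter_filter]
    congr! 2 with j
    rw [← Int.natAbs_eq_zero, hnatAbs, ← Int.natAbs_eq_zero, ← Int.natAbs_eq_zero]
    simp [hq.ne']
  symm
  calc liftCount q {j | ρ j = 0} (∑ j, (ρ j).natAbs) k z
      = Nat.card {c : {c : ι → ℤ // ∀ j, ρ j ≠ 0 → 0 ≤ c j} //
          ∑ j, (ρ j).natAbs + q * ∑ j, (c.1 j).natAbs = k ∧
            #{j ∈ {j | ρ j = 0} | c.1 j = 0} = z} :=
        Nat.card_congr <| (Equiv.subtypeEquivRight fun c => by simp).trans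
          (Equiv.subtypeSubtypeEquivSubtypeInter (fun c : ι → ℤ => ∀ j, ρ j ≠ 0 → 0 ≤ c j)
            fun c => ∑ j, (ρ j).natAbs + q * ∑ j, (c j).natAbs = k ∧
              #{j ∈ {j | ρ j = 0} | c j = 0} = z).symm
    _ = Nat.card {a : {a : ι → ℤ // ∀ j, (a j).tmod q = ρ j} //
          ∑ j, (a.1 j).natAbs = k ∧ #{j | a.1 j = 0} = z} :=
        Nat.card_congr <| e.symm.subtypeEquiv fun c => by rw [hnorm, hzero]
    _ = _ := Nat.card_congr <|
        Equiv.subtypeSubtypeEquivSubtypeInter (fun a : ι → ℤ => ∀ j, (a j).tmod q = ρ j)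
          fun a => ∑ j, (a j).natAbs = k ∧ #{j | a j = 0} = z

theorem Finset.exists_perm_mem_iff_mem {S T : Finset ι} (h : #S = #T) :
    ∃ σ : Equiv.Perm ι, ∀ j, σ j ∈ T ↔ j ∈ S := by
  classical
  refine ⟨(Finset.equivOfCardEq h).extendSubtype, fun j => ⟨fun hj => ?_, fun hj => ?_⟩⟩
  · by_contra hjS
    exact Equiv.extendSubtype_not_mem _ j hjS hj
  · exact Equiv.extendSubtype_mem _ j hj

theorem liftCount_eq_of_card_eq (q : ℕ) {S T : Finset ι} (h : #S = #T) (k' k z : ℕ) :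
    liftCount q S k' k z = liftCount q T k' k z := by
  obtain ⟨σ, hσ⟩ := Finset.exists_perm_mem_iff_mem h
  refine Nat.card_congr <| (σ.arrowCongr (Equiv.refl ℤ)).subtypeEquiv fun c => ?_
  have hcard : #{j ∈ T | c (σ.symm j) = 0} = #{j ∈ S | c j = 0} :=
    card_nbij' σ.symm σ (fun j => by simp [← hσ]) (fun j => by simp [← hσ])
      (fun j _ => by simp) (fun j _ => by simp)
  have hnonneg : (∀ j ∉ S, 0 ≤ c j) ↔ ∀ j ∉ T, 0 ≤ c (σ.symm j) := by
    rw [← σ.forall_congr_right (q := fun j => j ∉ T → 0 ≤ c (σ.symm j))]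
    simp [hσ]
  simp only [Equiv.arrowCongr_apply, Equiv.coe_refl, Function.comp_apply, id,
    Equiv.sum_comp σ.symm fun j => (c j).natAbs, hcard]
  rw [hnonneg]

theorem liftCount_self {q : ℕ} (hq : 0 < q) (S : Finset ι) (k z : ℕ) :
    liftCount q S k k z = if #S = z then 1 else 0 := by
  have h (c : ι → ℤ) : ((∀ j ∉ S, 0 ≤ c j) ∧ k + q * ∑ j, (c j).natAbs = k ∧
      #{j ∈ S | c j = 0} = z) ↔ c = 0 ∧ #S = z := by
    constructor
    · rintro ⟨-, hk, hz⟩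
      obtain rfl : c = 0 := by
        have : ∑ j, (c j).natAbs = 0 := by simpa [hq.ne'] using hk
        ext j
        simpa using sum_eq_zero_iff.1 this j (mem_univ j)
      simpa using hz
    · rintro ⟨rfl, hz⟩
      simpa using hz
  rw [liftCount, Nat.card_congr (Equiv.subtypeEquivRight h)]
  split_ifs with hS <;> simp [hS]

theorem liftCount_eq_zero_of_lt (q : ℕ) (S : Finset ι) {k' k : ℕ}
    (h : k < k') (z : ℕ) : liftCount q S k' k z = 0 := by
  have : IsEmpty {c : ι → ℤ // (∀ j ∉ S, 0 ≤ c j) ∧ k' + q * ∑ j, (c j).natAbs = k ∧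
      #{j ∈ S | c j = 0} = z} := ⟨fun c => by omega⟩
  exact Nat.card_of_isEmpty

theorem finite_of_natAbs_le {P : (ι → ℤ) → Prop} (N : ℕ) (h : ∀ a, P a → ∀ j, (a j).natAbs ≤ N) :
    Finite {a // P a} := by
  refine Set.Finite.to_subtype <|
    (Set.Finite.pi (t := fun _ => Set.Icc (-(N : ℤ)) N) fun _ => Set.finite_Icc _ _).subset ?_
  intro a ha j _
  have := h a ha j
  constructor <;> omega

end Lifts

section CongruenceLattice

variable {q m : ℕ} {s : Fin m → ℤ}

theorem tmod_mem_congLat_iff {a : Fin m → ℤ} :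
    (fun j => (a j).tmod q) ∈ congLat q m s ↔ a ∈ congLat q m s := by
  have h : ∑ j, a j * s j = ∑ j, (a j).tmod q * s j + q * ∑ j, (a j).tdiv q * s j := by
    rw [mul_sum, ← sum_add_distrib]
    refine sum_congr rfl fun j _ => ?_
    conv_lhs => rw [← Int.tmod_add_mul_tdiv (a j) q]
    ring
  simp only [congLat, Set.mem_ofPred_eq, h, dvd_add_left (dvd_mul_right _ _)]

variable (q m s) in
def reducedCongLat : Set (Fin m → ℤ) := {ρ | ρ ∈ congLat q m s ∧ ∀ j, (ρ j).natAbs < q}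

instance : Finite (reducedCongLat q m s) :=
  finite_of_natAbs_le q fun _ hρ j => (hρ.2 j).le

noncomputable instance : Fintype (reducedCongLat q m s) := Fintype.ofFinite _

theorem NL_eq_sum_liftCount (hq : 0 < q) (k z : ℕ) :
    NL q m s k z = ∑ ρ : reducedCongLat q m s,
      liftCount q {j | ρ.1 j = 0} (∑ j, (ρ.1 j).natAbs) k z := by
  let A := {a : Fin m → ℤ // a ∈ congLat q m s ∧ ∑ j, (a j).natAbs = k ∧ #{j | a j = 0} = z}
  have : Finite A := finite_of_natAbs_le k fun a ha j =>
    ha.2.1 ▸ single_le_sum (fun j _ => Nat.zero_le (a j).natAbs) (mem_univ j)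
  let reduce (a : A) : reducedCongLat q m s :=
    ⟨fun j => (a.1 j).tmod q, tmod_mem_congLat_iff.2 a.2.1, fun j => by
      simpa using Nat.mod_lt _ hq⟩
  rw [NL, ← Nat.card_congr (Equiv.sigmaFiberEquiv reduce), Nat.card_sigma]
  refine sum_congr rfl fun ρ _ => ?_
  rw [← card_tmod_fiber hq ρ.2.2]
  refine Nat.card_congr <| (Equiv.subtypeEquivRight fun a => ?_).trans <|
    Equiv.subtypeSubtypeEquivSubtype fun ha =>
      ⟨tmod_mem_congLat_iff.1 (by rw [funext ha.1]; exact ρ.2.1), ha.2⟩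
  simp only [reduce, Subtype.ext_iff, funext_iff, a.2.2, and_true]

theorem NLred_eq_card (k z : ℕ) :
    NLred q m s k z =
      #{ρ : reducedCongLat q m s | (∑ j, (ρ.1 j).natAbs, #{j | ρ.1 j = 0}) = (k, z)} := by
  rw [← Fintype.card_subtype, ← Nat.card_eq_fintype_card]
  refine (Nat.card_congr <| (Equiv.subtypeSubtypeEquivSubtypeInter (· ∈ reducedCongLat q m s)
    fun ρ => (∑ j, (ρ j).natAbs, #{j | ρ j = 0}) = (k, z)).trans <|
    Equiv.subtypeEquivRight fun a => ?_).symm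
  simp [reducedCongLat, and_assoc]

theorem NL_eq_sum_liftCount_mul_NLred (hq : 0 < q) (k z : ℕ) :
    NL q m s k z = ∑ k' ∈ range (k + 1), ∑ z' ∈ range (m + 1),
      liftCount q {i : Fin m | (i : ℕ) < z'} k' k z * NLred q m s k' z' := by
  set F : ℕ × ℕ → ℕ := fun p => liftCount q {i : Fin m | (i : ℕ) < p.2} p.1 k z
  set g : reducedCongLat q m s → ℕ × ℕ := fun ρ => (∑ j, (ρ.1 j).natAbs, #{j | ρ.1 j = 0})
  have hzeros (ρ : Fin m → ℤ) : #{j | ρ j = 0} ≤ m := (card_filter_le _ _).trans_eq (card_fin m)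
  have hF (ρ : reducedCongLat q m s) :
      liftCount q {j | ρ.1 j = 0} (∑ j, (ρ.1 j).natAbs) k z = F (g ρ) :=
    liftCount_eq_of_card_eq q (by rw [Fin.card_filter_val_lt, min_eq_right (hzeros ρ)]) _ _ _
  rw [← sum_product (f := fun p => F p * NLred q m s p.1 p.2), NL_eq_sum_liftCount hq,
    sum_congr rfl fun ρ _ => hF ρ,
    ← sum_filter_of_ne (p := fun ρ => g ρ ∈ range (k + 1) ×ˢ range (m + 1)),
    ← sum_fiberwise_eq_sum_filter]
  · refine sum_congr rfl fun p _ => ?_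
    rw [sum_congr rfl fun ρ hρ => congrArg F (mem_filter.1 hρ).2, sum_const, smul_eq_mul,
      mul_comm, NLred_eq_card]
  · intro ρ _ hne
    simp only [mem_product, mem_range, g]
    refine ⟨?_, Nat.lt_succ_of_le (hzeros ρ)⟩
    by_contra hk
    exact hne (liftCount_eq_zero_of_lt q _ (show k < (g ρ).1 by simp only [g]; omega) z)

end CongruenceLattice

theorem forall_eq_iff_of_unitriangular {m : ℕ} {N N' R R' : ℕ → ℕ → ℕ}
    (F : ℕ → ℕ → ℕ → ℕ → ℕ) (hF : ∀ k z z', z' ≤ m → F k z k z' = if z' = z then 1 else 0)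
    (hN : ∀ k z, N k z = ∑ k' ∈ range (k + 1), ∑ z' ∈ range (m + 1), F k z k' z' * R k' z')
    (hN' : ∀ k z, N' k z = ∑ k' ∈ range (k + 1), ∑ z' ∈ range (m + 1), F k z k' z' * R' k' z') :
    (∀ k z, z ≤ m → N k z = N' k z) ↔ (∀ k z, z ≤ m → R k z = R' k z) := by
  have split (R : ℕ → ℕ → ℕ) (k z : ℕ) (hz : z ≤ m) :
      ∑ k' ∈ range (k + 1), ∑ z' ∈ range (m + 1), F k z k' z' * R k' z' =
        ∑ k' ∈ range k, ∑ z' ∈ range (m + 1), F k z k' z' * R k' z' + R k z := by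
    rw [sum_range_succ, add_right_inj]
    calc ∑ z' ∈ range (m + 1), F k z k z' * R k z'
        = ∑ z' ∈ range (m + 1), if z' = z then R k z' else 0 :=
          sum_congr rfl fun z' hz' => by
            rw [hF k z z' (Nat.lt_succ_iff.1 (mem_range.1 hz'))]
            split_ifs <;> simp
      _ = R k z := by simp [hz]
  constructor
  · intro h k
    induction k using Nat.strong_induction_on with
    | _ k ih =>
      intro z hz
      have hk := h k z hz
      rw [hN, hN', split R k z hz, split R' k z hz,
        sum_congr rfl fun k' hk' => sum_congr rfl fun z' hz' => by
          rw [ih k' (mem_range.1 hk') z' (Nat.lt_succ_iff.1 (mem_range.1 hz'))]] at hk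
      exact Nat.add_left_cancel hk
  · intro h k z _
    rw [hN, hN']
    exact sum_congr rfl fun k' _ => sum_congr rfl fun z' hz' => by
      rw [h k' z' (Nat.lt_succ_iff.1 (mem_range.1 hz'))]

theorem NL_eq_iff_NLred_eq_general (q m : ℕ) (hq : 1 ≤ q) (s s' : Fin m → ℤ) :
    (∀ k z : ℕ, z ≤ m → NL q m s k z = NL q m s' k z) ↔
      (∀ k z : ℕ, z ≤ m → NLred q m s k z = NLred q m s' k z) :=
  forall_eq_iff_of_unitriangular (fun k z k' z' => liftCount q {i : Fin m | (i : ℕ) < z'} k' k z)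
    (fun k z z' hz' => by rw [liftCount_self hq, Fin.card_filter_val_lt, min_eq_right hz'])
    (NL_eq_sum_liftCount_mul_NLred hq) (NL_eq_sum_liftCount_mul_NLred hq)

/-- Two congruence lattices with the same modulus have the same counts `N(k,z)` for all
`k, z` iff they have the same reduced counts `N^red(k,z)` for all `k, z`. -/
theorem NL_eq_iff_NLred_eq (q m : ℕ) (hq : 1 ≤ q) (hm : 1 ≤ m) (s s' : Fin m → ℤ) :
    (∀ k z : ℕ, z ≤ m → NL q m s k z = NL q m s' k z) ↔
      (∀ k z : ℕ, z ≤ m → NLred q m s k z = NLred q m s' k z) :=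
  NL_eq_iff_NLred_eq_general q m hq s s'
end

section
/- Let r ≥ 6 and t ≥ 1 be integers. Then the congruence lattices 𝓛(r²t; 1, 1+rt, 1+3rt) and 𝓛(r²t; 1, 1−rt, 1−3rt) in ℤ³ are not ‖·‖₁-isometric. -/
/-- The image of a subset of `ℤ^m` inside `ℝ^m`. -/
def intCastImg {m : ℕ} (L : Set (Fin m → ℤ)) : Set (Fin m → ℝ) :=
  (fun (a : Fin m → ℤ) (j : Fin m) => (a j : ℝ)) '' L

/-- Two subsets of `ℤ^m` are `‖·‖₁`-isometric if some linear bijection of `ℝ^m`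
preserving the one-norm maps one onto the other. -/
def OneNormIsometric {m : ℕ} (L L' : Set (Fin m → ℤ)) : Prop :=
  ∃ T : (Fin m → ℝ) ≃ₗ[ℝ] (Fin m → ℝ),
    (∀ x : Fin m → ℝ, ∑ j, |T x j| = ∑ j, |x j|) ∧
    T '' (intCastImg L) = intCastImg L'

open Finset

section OneNormIsometry

variable {ι : Type*} [Fintype ι]

theorem abs_add_add_abs_sub_add_two_mul_min (x y : ℝ) :
    |x + y| + |x - y| + 2 * min |x| |y| = 2 * (|x| + |y|) := by
  rcases abs_cases x with hx | hx <;> rcases abs_cases y with hy | hy <;>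
    rcases abs_cases (x + y) with h₁ | h₁ <;> rcases abs_cases (x - y) with h₂ | h₂ <;>
    rcases min_cases |x| |y| with h₃ | h₃ <;> linarith

theorem eq_zero_or_eq_zero_of_sum_abs_add_add_sum_abs_sub (a b : ι → ℝ)
    (h : ∑ i, |a i + b i| + ∑ i, |a i - b i| = 2 * (∑ i, |a i| + ∑ i, |b i|)) (i : ι) :
    a i = 0 ∨ b i = 0 := by
  have hsum : ∑ i, min |a i| |b i| = 0 := by
    have := Finset.sum_congr rfl fun i (_ : i ∈ univ) =>
      abs_add_add_abs_sub_add_two_mul_min (a i) (b i)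
    simp only [sum_add_distrib, ← mul_sum] at this
    linarith
  have hmin := (sum_eq_zero_iff_of_nonneg fun i _ =>
    le_min (abs_nonneg (a i)) (abs_nonneg (b i))).1 hsum i (mem_univ i)
  rcases min_choice |a i| |b i| with h | h <;> rw [h, abs_eq_zero] at hmin <;> simp [hmin]

variable [DecidableEq ι]

theorem sum_abs_single_add_single {j k : ι} (hjk : j ≠ k) {c : ℝ} (hc : |c| = 1) :
    ∑ i, |(Pi.single j 1 + Pi.single k c : ι → ℝ) i| = 2 := by
  rw [sum_eq_add j k hjk (fun i _ hi => by simp [hi.1, hi.2]) (by simp) (by simp)]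
  norm_num [hjk, hjk.symm, hc]

theorem sum_abs_map_single_eq_one {T : (ι → ℝ) →ₗ[ℝ] (ι → ℝ)}
    (hT : ∀ x, ∑ i, |T x i| = ∑ i, |x i|) (j : ι) : ∑ i, |T (Pi.single j 1) i| = 1 := by
  simpa [Pi.single_apply, apply_ite] using hT (Pi.single j 1)

theorem map_single_eq_zero_or_eq_zero {T : (ι → ℝ) →ₗ[ℝ] (ι → ℝ)}
    (hT : ∀ x, ∑ i, |T x i| = ∑ i, |x i|) {j k : ι} (hjk : j ≠ k) (i : ι) :
    T (Pi.single j 1) i = 0 ∨ T (Pi.single k 1) i = 0 := by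
  apply eq_zero_or_eq_zero_of_sum_abs_add_add_sum_abs_sub
  have hadd := hT (Pi.single j 1 + Pi.single k 1)
  have hsub := hT (Pi.single j 1 + Pi.single k (-1))
  rw [sum_abs_single_add_single hjk abs_one] at hadd
  rw [sum_abs_single_add_single hjk (by simp)] at hsub
  simp only [map_add, map_sub, Pi.single_neg, ← sub_eq_add_neg, Pi.add_apply,
    Pi.sub_apply] at hadd hsub
  rw [hadd, hsub, sum_abs_map_single_eq_one hT, sum_abs_map_single_eq_one hT]
  norm_num

theorem exists_signed_perm_of_sum_abs_map_eq (T : (ι → ℝ) →ₗ[ℝ] (ι → ℝ))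
    (hT : ∀ x, ∑ i, |T x i| = ∑ i, |x i|) :
    ∃ (σ : Equiv.Perm ι) (ε : ι → ℤˣ), ∀ x i, T x i = ((ε i : ℤ) : ℝ) * x (σ i) := by
  have hexp : ∀ x i, T x i = ∑ j, T (Pi.single j 1) i * x j := fun x i => by
    rw [← LinearMap.toMatrix'_mulVec]; rfl
  have hcol := sum_abs_map_single_eq_one hT
  have hdisj := fun j k (hjk : j ≠ k) => map_single_eq_zero_or_eq_zero hT hjk
  have hsupp : ∀ j, ∃ i, T (Pi.single j 1) i ≠ 0 := fun j => by
    by_contra! h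
    simpa [h] using hcol j
  choose g hg using hsupp
  have hg_inj : g.Injective := fun j k hjk => by
    by_contra hne
    rcases hdisj j k hne (g j) with h | h
    exacts [hg j h, hg k (hjk ▸ h)]
  let e := Equiv.ofBijective g (Finite.injective_iff_bijective.1 hg_inj)
  have hge : ∀ i, g (e.symm i) = i := e.apply_symm_apply
  have hzero : ∀ j i, i ≠ g j → T (Pi.single j 1) i = 0 := fun j i hi =>
    (hdisj (e.symm i) j (by rintro rfl; exact hi (hge i).symm) i).resolve_left
      (by simpa only [hge] using hg (e.symm i))
  have hsign : ∀ i, ∃ u : ℤˣ, ((u : ℤ) : ℝ) = T (Pi.single (e.symm i) 1) i := by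
    intro i
    have h1 := hcol (e.symm i)
    rw [sum_eq_single i (fun i' _ hi' => by rw [hzero _ _ (by rwa [hge]), abs_zero]) (by simp)]
      at h1
    rcases (abs_eq zero_le_one).1 h1 with h | h
    exacts [⟨1, by simp [h]⟩, ⟨-1, by simp [h]⟩]
  choose ε hε using hsign
  refine ⟨e.symm, ε, fun x i => ?_⟩
  rw [hexp, sum_eq_single (e.symm i) (fun j _ hj => by
    rw [hzero j i (by rintro rfl; exact hj (e.symm_apply_apply j).symm), zero_mul]) (by simp), hε]

end OneNormIsometry

section CongLat

variable {m : ℕ}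

theorem signed_perm_mem_of_image_intCastImg_eq {L L' : Set (Fin m → ℤ)}
    {T : (Fin m → ℝ) → Fin m → ℝ} {σ : Equiv.Perm (Fin m)} {ε : Fin m → ℤˣ}
    (hT : ∀ x i, T x i = ((ε i : ℤ) : ℝ) * x (σ i)) (himg : T '' intCastImg L = intCastImg L')
    {a : Fin m → ℤ} (ha : a ∈ L) : (fun i => (ε i : ℤ) * a (σ i)) ∈ L' := by
  obtain ⟨b, hb, hba⟩ : T (fun j => (a j : ℝ)) ∈ intCastImg L' :=
    himg ▸ Set.mem_image_of_mem T ⟨a, ha, rfl⟩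
  convert hb using 1
  funext i
  have hi : (b i : ℝ) = T _ i := congrFun hba i
  rw [hT] at hi
  exact_mod_cast hi.symm

theorem mem_congLat_signed_perm_iff (q : ℕ) (s : Fin m → ℤ) (σ : Equiv.Perm (Fin m))
    (ε : Fin m → ℤˣ) (a : Fin m → ℤ) :
    (fun i => (ε i : ℤ) * a (σ i)) ∈ congLat q m s ↔
      a ∈ congLat q m (fun j => ε (σ.symm j) * s (σ.symm j)) := by
  simp only [congLat, Set.mem_ofPred_eq]
  rw [← Equiv.sum_comp σ (fun j => a j * (ε (σ.symm j) * s (σ.symm j)))]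
  simp only [Equiv.symm_apply_apply, mul_assoc, mul_left_comm]

theorem dvd_sub_mul_of_congLat_subset {q : ℕ} {s u : Fin m → ℤ} {i₀ : Fin m} (hs : s i₀ = 1)
    (h : congLat q m s ⊆ congLat q m u) (j : Fin m) : (q : ℤ) ∣ u j - u i₀ * s j := by
  have hmem : Pi.single j 1 - s j • Pi.single i₀ 1 ∈ congLat q m s := by
    simp [congLat, sub_mul, sum_sub_distrib, Pi.single_apply, hs]
  simpa [congLat, mul_sub, sum_sub_distrib, Pi.single_apply, mul_comm] using h hmem

end CongLat

theorem Int.units_eq_of_dvd_sub {n : ℤ} (hn : 2 < n) {u v : ℤˣ} (h : n ∣ (u : ℤ) - v) :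
    u = v := by
  rcases Int.units_eq_one_or u with rfl | rfl <;> rcases Int.units_eq_one_or v with rfl | rfl <;>
    first | rfl | (norm_num at h; have := Int.le_of_dvd two_pos h; omega)

theorem dvd_of_dvd_unit_mul_sub (r t x y z : ℤ) (u v : ℤˣ) (hrt : 2 < r * t)
    (h : r ^ 2 * t ∣ u * (1 - y * (r * t)) - v * (1 - z * (r * t)) * (1 + x * (r * t))) :
    r ∣ x + y - z := by
  have huv : u = v := by
    refine Int.units_eq_of_dvd_sub hrt ?_
    have hrt_dvd : r * t ∣ _ := (Dvd.intro r (by ring)).trans h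
    have : (u : ℤ) - v = u * (1 - y * (r * t)) - v * (1 - z * (r * t)) * (1 + x * (r * t)) +
        r * t * (u * y + v * (x - z - x * z * (r * t))) := by ring
    rw [this]
    exact dvd_add hrt_dvd (dvd_mul_right _ _)
  subst huv
  have h' : r * (r * t) ∣ (1 - y * (r * t)) - (1 - z * (r * t)) * (1 + x * (r * t)) := by
    rw [mul_assoc, ← mul_sub] at h
    simpa [Units.dvd_mul_left, pow_two, mul_assoc] using h
  have : (x + y - z) * (r * t) = r * (r * t) * (x * z * t) -
      ((1 - y * (r * t)) - (1 - z * (r * t)) * (1 + x * (r * t))) := by ring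
  rw [← mul_dvd_mul_iff_right (by omega : r * t ≠ 0), this]
  exact dvd_sub (dvd_mul_right _ _) h'

def offset : Fin 3 → ℤ := ![0, 1, 3]

theorem exists_not_dvd_offset_add_sub {r : ℤ} (hr : 6 ≤ r) (π : Equiv.Perm (Fin 3)) :
    ∃ j, ¬ r ∣ offset j + offset (π j) - offset (π 0) := by
  obtain ⟨j, hne, hlt⟩ : ∃ j, offset j + offset (π j) - offset (π 0) ≠ 0 ∧
      |offset j + offset (π j) - offset (π 0)| < 6 := by
    revert π; decide
  exact ⟨j, fun h => hne (Int.eq_zero_of_abs_lt_dvd h (by omega))⟩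

/-- For `r ≥ 6`, the congruence lattices `𝓛(r²t; 1, 1+rt, 1+3rt)` and
`𝓛(r²t; 1, 1-rt, 1-3rt)` are not `‖·‖₁`-isometric. -/
theorem congLat_pair_not_isometric (r t : ℕ) (hr : 6 ≤ r) (ht : 1 ≤ t) :
    ¬ OneNormIsometric
        (congLat (r ^ 2 * t) 3 ![(1 : ℤ), 1 + (r : ℤ) * t, 1 + 3 * (r : ℤ) * t])
        (congLat (r ^ 2 * t) 3 ![(1 : ℤ), 1 - (r : ℤ) * t, 1 - 3 * (r : ℤ) * t]) := by
  rintro ⟨T, hT, himg⟩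
  have hs : ∀ j, ![(1 : ℤ), 1 + (r : ℤ) * t, 1 + 3 * (r : ℤ) * t] j =
      1 + offset j * (r * t) := by
    intro j; fin_cases j <;> simp [offset, mul_assoc]
  have hs' : ∀ j, ![(1 : ℤ), 1 - (r : ℤ) * t, 1 - 3 * (r : ℤ) * t] j =
      1 - offset j * (r * t) := by
    intro j; fin_cases j <;> simp [offset, mul_assoc]
  obtain ⟨σ, ε, hTσ⟩ := exists_signed_perm_of_sum_abs_map_eq T.toLinearMap hT
  have hsub := fun a ha => (mem_congLat_signed_perm_iff _ _ σ ε a).1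
    (signed_perm_mem_of_image_intCastImg_eq hTσ himg ha)
  obtain ⟨j, hj⟩ := exists_not_dvd_offset_add_sub (r := r) (by exact_mod_cast hr) σ.symm
  refine hj (dvd_of_dvd_unit_mul_sub r t _ _ _ (ε (σ.symm j)) (ε (σ.symm 0)) (by nlinarith) ?_)
  have := dvd_sub_mul_of_congLat_subset (i₀ := 0) rfl hsub j
  simp only [hs, hs'] at this
  push_cast at this
  simpa [mul_assoc] using this
end
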